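/- Let k, n be positive integers with k ≤ p·n and 0 < p < 1. Then 1/(e·√k) < L(n,k,p)/(e·√k) ≤ (k^k·L(n,k,p))/(e^k·k!) < B_{n,k}(p)·e^{n·D(k/n‖p)} < √(n/(n-k))·(k^k·U(n,k,p))/(e^k·k!). -/

import Mathlib

open Real

/-- Binomial probability `b_{n,k}(p)`. -/
noncomputable def b (n k : ℕ) (p : ℝ) : ℝ :=
  (n.choose k : ℝ) * p ^ k * (1 - p) ^ (n - k)

/-- Lower tail probability `B_{n,k}(p)`. -/
noncomputable def B (n k : ℕ) (p : ℝ) : ℝ :=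
  ∑ j ∈ Finset.range (k + 1), (n.choose j : ℝ) * p ^ j * (1 - p) ^ (n - j)

/-- Relative entropy `D(f‖p)`. -/
noncomputable def D (f p : ℝ) : ℝ :=
  f * Real.log (f / p) + (1 - f) * Real.log ((1 - f) / (1 - p))

noncomputable def L (n k p : ℝ) : ℝ :=
  (k + 1 - p * n + Real.sqrt ((p * n - k + 1) ^ 2 + 4 * (1 - p) * k)) / 2

noncomputable def V (n k p a : ℝ) : ℝ :=
  a + p * (n - k + a + 1) / (p * n + p - k + a)

noncomputable def U (n k p : ℝ) : ℝ := ⨅ a : ℕ, V n k p (a : ℝ)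

/-!
Write `m = n - k`, `q = 1 - p` and `c_j = b_{n,k-j}(p) / b_{n,k}(p)`, so that `B_{n,k} = b_{n,k} S`
with `S = ∑_{j ≤ k} c_j`. The ratios `ρ_j = c_{j+1} / c_j = q (k - j) / (p (m + j + 1))`
decrease, so `c` is submultiplicative and `c_{a+i} ≤ c_a ρ_a ^ i`. Submultiplicativity gives
`∑ j c_j ≤ (S - 1) S`, while summing the recurrence for `c` gives
`∑ j c_j = q k S - p m (S - 1)`; together they force `S ≥ L`. Bounding the first `a` terms of
`S` by `1` and the others by a geometric series gives `S < a + 1 / (1 - ρ_a) = V(a)`, hence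
`S < U`.

Finally `b_{n,k} e^{n D(k/n ‖ p)} = C(n,k) (k/n)^k (m/n)^m = t_n / (t_k t_m)` with
`t_j = j! e^j / j^j`. The sequence `t` increases because `(1 + 1/j)^j < e`, and `t_j / √j`
decreases (it is Stirling's sequence up to a constant); this gives `1 < t_n / t_m ≤ √(n/m)` and
`t_k ≤ e √k`.
-/

open Finset

noncomputable def factorialExpRatio (j : ℕ) : ℝ := j.factorial * exp 1 ^ j / (j : ℝ) ^ j

theorem factorialExpRatio_pos (j : ℕ) : 0 < factorialExpRatio j := by
  rcases j.eq_zero_or_pos with rfl | hj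
  · simp [factorialExpRatio]
  · unfold factorialExpRatio; positivity

theorem factorialExpRatio_one : factorialExpRatio 1 = exp 1 := by
  simp [factorialExpRatio]

theorem add_one_pow_lt_exp_one_mul_pow {j : ℕ} (hj : 0 < j) :
    ((j : ℝ) + 1) ^ j < exp 1 * (j : ℝ) ^ j := by
  have hj' : (0 : ℝ) < j := by exact_mod_cast hj
  have h1 : 1 + 1 / (j : ℝ) < exp (1 / j) := by
    linarith [add_one_lt_exp (one_div_pos.2 hj').ne']
  calc ((j : ℝ) + 1) ^ j = (1 + 1 / (j : ℝ)) ^ j * (j : ℝ) ^ j := by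
        rw [← mul_pow]; field_simp
    _ < exp (1 / j) ^ j * (j : ℝ) ^ j := by gcongr
    _ = exp 1 * (j : ℝ) ^ j := by
        rw [← exp_nat_mul]; field_simp

theorem factorialExpRatio_lt_succ {j : ℕ} (hj : 0 < j) :
    factorialExpRatio j < factorialExpRatio (j + 1) := by
  have hsucc : factorialExpRatio (j + 1) =
      factorialExpRatio j * (exp 1 * (j : ℝ) ^ j / ((j : ℝ) + 1) ^ j) := by
    unfold factorialExpRatio
    push_cast [Nat.factorial_succ]
    field_simp
    ring
  rw [hsucc]
  exact lt_mul_of_one_lt_right (factorialExpRatio_pos j)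
    ((one_lt_div (by positivity)).2 (add_one_pow_lt_exp_one_mul_pow hj))

theorem factorialExpRatio_lt {m n : ℕ} (hm : 0 < m) (hmn : m < n) :
    factorialExpRatio m < factorialExpRatio n := by
  induction n, hmn using Nat.le_induction with
  | base => exact factorialExpRatio_lt_succ hm
  | succ n hmn ih => exact ih.trans (factorialExpRatio_lt_succ (hm.trans hmn))

theorem factorialExpRatio_eq_stirlingSeq_mul {j : ℕ} (hj : 0 < j) :
    factorialExpRatio j = Stirling.stirlingSeq j * √(2 * j) := by
  unfold factorialExpRatio Stirling.stirlingSeq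
  rw [div_pow]
  field_simp

theorem factorialExpRatio_div_le {m n : ℕ} (hm : 0 < m) (hmn : m ≤ n) :
    factorialExpRatio n / factorialExpRatio m ≤ √(n / m) := by
  have hn : 0 < n := hm.trans_le hmn
  have hs : Stirling.stirlingSeq n ≤ Stirling.stirlingSeq m := by
    simpa [Nat.sub_add_cancel hm, Nat.sub_add_cancel hn] using
      Stirling.stirlingSeq'_antitone (Nat.sub_le_sub_right hmn 1)
  have hsqrt : √(2 * n : ℝ) = √(n / m) * √(2 * m) := by
    rw [← sqrt_mul (by positivity)]; congr 1; field_simp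
  rw [div_le_iff₀ (factorialExpRatio_pos m), factorialExpRatio_eq_stirlingSeq_mul hm,
    factorialExpRatio_eq_stirlingSeq_mul hn, hsqrt]
  have : 0 ≤ √(n / m : ℝ) * √(2 * m) := by positivity
  nlinarith

theorem pow_mul_div_exp_pow_mul_factorial (k : ℕ) (x : ℝ) :
    (k : ℝ) ^ k * x / (exp 1 ^ k * k.factorial) = x / factorialExpRatio k := by
  have := factorialExpRatio_pos k
  unfold factorialExpRatio at this ⊢
  field_simp

theorem choose_mul_div_pow_mul_div_pow {n k : ℕ} (hkn : k ≤ n) :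
    (n.choose k : ℝ) * (k / n : ℝ) ^ k * (((n : ℝ) - k) / n) ^ (n - k) =
      factorialExpRatio n / (factorialExpRatio k * factorialExpRatio (n - k)) := by
  obtain ⟨m, rfl⟩ := Nat.exists_eq_add_of_le hkn
  have hchoose : ((k + m).choose k : ℝ) = (k + m).factorial / (k.factorial * m.factorial) := by
    rw [Nat.choose_eq_factorial_div_factorial hkn, Nat.add_sub_cancel_left, Nat.cast_div
      (Nat.factorial_mul_factorial_dvd_factorial_add k m) (by positivity)]
    push_cast; ring
  rw [Nat.add_sub_cancel_left, hchoose]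
  unfold factorialExpRatio
  push_cast
  rw [add_sub_cancel_left, div_pow, div_pow, pow_add, pow_add]
  field_simp

theorem b_mul_exp_mul_D {n k : ℕ} (hk : 0 < k) (hkn : k < n) {p : ℝ} (hp0 : 0 < p)
    (hp1 : p < 1) :
    b n k p * exp (n * D (k / n) p) =
      (n.choose k : ℝ) * (k / n : ℝ) ^ k * (((n : ℝ) - k) / n) ^ (n - k) := by
  have hn : (0 : ℝ) < n := by exact_mod_cast hk.trans hkn
  have hnk : (0 : ℝ) < n - k := by
    have : (k : ℝ) < n := by exact_mod_cast hkn
    linarith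
  have hq : 0 < 1 - p := by linarith
  have hD : n * D (k / n) p =
      k * log (k / n / p) + ((n - k : ℕ) : ℝ) * log ((n - k) / n / (1 - p)) := by
    rw [D, Nat.cast_sub hkn.le]
    field_simp
  rw [hD, exp_add, exp_nat_mul, exp_nat_mul, exp_log (by positivity), exp_log (by positivity), b]
  simp only [div_pow]
  field_simp

section AntitoneFactors

variable {ρ : ℕ → ℝ}

theorem prod_range_add_le_mul (h0 : ∀ i, 0 ≤ ρ i) (hρ : Antitone ρ) (i j : ℕ) :
    ∏ t ∈ range (i + j), ρ t ≤ (∏ t ∈ range i, ρ t) * ∏ t ∈ range j, ρ t := by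
  rw [prod_range_add]
  gcongr with t
  · exact prod_nonneg fun t _ ↦ h0 t
  · exact fun t _ ↦ h0 _
  · exact hρ (Nat.le_add_left t i)

theorem prod_range_add_le_mul_pow (h0 : ∀ i, 0 ≤ ρ i) (hρ : Antitone ρ) (a i : ℕ) :
    ∏ t ∈ range (a + i), ρ t ≤ (∏ t ∈ range a, ρ t) * ρ a ^ i := by
  have htail : ∏ t ∈ range i, ρ (a + t) ≤ ρ a ^ i := by
    simpa using prod_le_prod (s := range i) (fun t _ ↦ h0 (a + t))
      fun t _ ↦ hρ (Nat.le_add_right a t)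
  rw [prod_range_add]
  exact mul_le_mul_of_nonneg_left htail (prod_nonneg fun t _ ↦ h0 t)

end AntitoneFactors

theorem geom_sum_le_inv_one_sub {x : ℝ} (h0 : 0 ≤ x) (h1 : x < 1) (N : ℕ) :
    ∑ i ∈ range N, x ^ i ≤ (1 - x)⁻¹ := by
  have h : 0 < 1 - x := sub_pos.2 h1
  rw [← mul_le_mul_iff_of_pos_left h, mul_neg_geom_sum, mul_inv_cancel₀ h.ne']
  linarith [pow_nonneg h0 N]

theorem geom_sum_lt_inv_one_sub {x : ℝ} (h0 : 0 < x) (h1 : x < 1) (N : ℕ) :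
    ∑ i ∈ range N, x ^ i < (1 - x)⁻¹ := by
  have h : 0 < 1 - x := sub_pos.2 h1
  rw [← mul_lt_mul_iff_of_pos_left h, mul_neg_geom_sum, mul_inv_cancel₀ h.ne']
  linarith [pow_pos h0 N]

theorem sum_range_succ_mul_le_sq {f : ℕ → ℝ} (h0 : ∀ i, 0 ≤ f i)
    (hf : ∀ i j, f (i + j) ≤ f i * f j) (N : ℕ) :
    ∑ s ∈ range N, (s + 1) * f s ≤ (∑ s ∈ range N, f s) ^ 2 := by
  calc ∑ s ∈ range N, (s + 1) * f s
      = ∑ s ∈ range N, ∑ i ∈ range (s + 1), f (i + (s - i)) := by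
        refine sum_congr rfl fun s _ ↦ ?_
        rw [sum_congr rfl fun i hi ↦ congrArg f (Nat.add_sub_cancel' (mem_range_succ_iff.1 hi))]
        simp
    _ = ∑ i ∈ range N, ∑ j ∈ range (N - i), f (i + j) :=
        sum_range_diag_flip N fun i j ↦ f (i + j)
    _ ≤ ∑ i ∈ range N, ∑ j ∈ range N, f i * f j := by
        refine sum_le_sum fun i _ ↦ (sum_le_sum fun j _ ↦ hf i j).trans ?_
        exact sum_le_sum_of_subset_of_nonneg (range_subset_range.2 (Nat.sub_le N i))
          fun j _ _ ↦ mul_nonneg (h0 i) (h0 j)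
    _ = (∑ s ∈ range N, f s) ^ 2 := by rw [sq, sum_mul_sum]

theorem L_le_of_le_mul {n k p x : ℝ} (hkp : k ≤ p * n) (hx : 1 ≤ x)
    (h : (1 - p) * k ≤ (x - 1) * (x + p * n - k)) : L n k p ≤ x := by
  have hsqrt : √((p * n - k + 1) ^ 2 + 4 * (1 - p) * k) ≤ 2 * x + p * n - k - 1 :=
    sqrt_le_iff.2 ⟨by linarith, by nlinarith⟩
  unfold L
  linarith

theorem one_lt_L {n k p : ℝ} (hkp : k ≤ p * n) (h : 0 < (1 - p) * k) : 1 < L n k p := by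
  have hsqrt : p * n - k + 1 < √((p * n - k + 1) ^ 2 + 4 * (1 - p) * k) :=
    (lt_sqrt (by linarith)).2 (by linarith)
  unfold L
  linarith

theorem lt_V_self {n k p a : ℝ} (hp : 0 < p) (hkp : k ≤ p * n) (hkn : k ≤ n) (ha : 0 ≤ a) :
    a < V n k p a := by
  have hden : 0 < p * n + p - k + a := by linarith
  have : 0 < p * (n - k + a + 1) / (p * n + p - k + a) := by
    apply div_pos _ hden
    nlinarith
  unfold V
  linarith

theorem V_self {n k p : ℝ} (h : p * n + p ≠ 0) : V n k p k = k + 1 := by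
  have hnum : p * (n - k + k + 1) = p * n + p - k + k := by ring
  rw [V, hnum, div_self (by rwa [sub_add_cancel])]

theorem mul_b_eq_mul_b_succ {n t : ℕ} (ht : t < n) (p : ℝ) :
    p * (n - t : ℕ) * b n t p = (1 - p) * (t + 1 : ℕ) * b n (t + 1) p := by
  have hchoose : (n.choose (t + 1) : ℝ) * (t + 1 : ℕ) = n.choose t * (n - t : ℕ) := by
    exact_mod_cast Nat.choose_succ_right_eq n t
  have hpow : (1 - p) ^ (n - t) = (1 - p) ^ (n - (t + 1)) * (1 - p) := by
    rw [← pow_succ]; congr 1; omega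
  rw [b, b, hpow, pow_succ]
  linear_combination (-(p ^ t * p * (1 - p) ^ (n - (t + 1)) * (1 - p))) * hchoose

namespace BinomialTail

/-- For `j < k` this is `b n (k - j - 1) p / b n (k - j) p`; the truncated `k - j` makes it vanish
from `j = k` on, so that the ratios are nonnegative and antitone on all of `ℕ`. -/
noncomputable def ratio (n k : ℕ) (p : ℝ) (j : ℕ) : ℝ :=
  (1 - p) * (k - j : ℕ) / (p * (n - k + j + 1 : ℕ))

/-- For `j ≤ k` this is `b n (k - j) p / b n k p`. -/
noncomputable def relProb (n k : ℕ) (p : ℝ) (j : ℕ) : ℝ := ∏ i ∈ range j, ratio n k p i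

noncomputable def relTail (n k : ℕ) (p : ℝ) : ℝ := ∑ j ∈ range (k + 1), relProb n k p j

variable {n k : ℕ} {p : ℝ}

theorem ratio_nonneg (hp0 : 0 ≤ p) (hp1 : p ≤ 1) (j : ℕ) : 0 ≤ ratio n k p j := by
  have : 0 ≤ 1 - p := by linarith
  unfold ratio
  positivity

theorem ratio_pos (hp0 : 0 < p) (hp1 : p < 1) {j : ℕ} (hj : j < k) : 0 < ratio n k p j := by
  have : 0 < 1 - p := by linarith
  have : (0 : ℝ) < (k - j : ℕ) := by exact_mod_cast Nat.sub_pos_of_lt hj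
  unfold ratio
  positivity

theorem ratio_antitone (hp0 : 0 < p) (hp1 : p ≤ 1) : Antitone (ratio n k p) := by
  intro i j hij
  have : 0 ≤ 1 - p := by linarith
  unfold ratio
  gcongr

theorem ratio_self : ratio n k p k = 0 := by simp [ratio]

theorem ratio_zero_lt_one (hp0 : 0 < p) (hkn : k ≤ n) (hkp : (k : ℝ) ≤ p * n) :
    ratio n k p 0 < 1 := by
  rw [ratio, div_lt_one (by positivity)]
  push_cast [Nat.sub_zero, Nat.cast_sub hkn]
  nlinarith

theorem ratio_lt_one (hp0 : 0 < p) (hp1 : p ≤ 1) (hkn : k ≤ n) (hkp : (k : ℝ) ≤ p * n)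
    (j : ℕ) : ratio n k p j < 1 :=
  (ratio_antitone hp0 hp1 j.zero_le).trans_lt (ratio_zero_lt_one hp0 hkn hkp)

theorem mul_ratio (hp : p ≠ 0) (j : ℕ) :
    p * (n - k + j + 1 : ℕ) * ratio n k p j = (1 - p) * (k - j : ℕ) := by
  rw [ratio, mul_div_cancel₀]
  exact mul_ne_zero hp (by positivity)

theorem V_eq_add_inv_one_sub_ratio (hp : p ≠ 0) (hkn : k ≤ n) {a : ℕ} (ha : a ≤ k) :
    V n k p a = a + (1 - ratio n k p a)⁻¹ := by
  have hden : p * ((n - k + a + 1 : ℕ) : ℝ) ≠ 0 := mul_ne_zero hp (by positivity)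
  have h : 1 - ratio n k p a = (p * n + p - k + a) / (p * (n - k + a + 1 : ℕ)) := by
    rw [ratio, eq_div_iff hden, sub_mul, div_mul_cancel₀ _ hden]
    push_cast [Nat.cast_sub hkn, Nat.cast_sub ha]
    ring
  rw [V, h, inv_div]
  push_cast [Nat.cast_sub hkn]
  ring

theorem relProb_zero : relProb n k p 0 = 1 := prod_range_zero _

theorem relProb_succ (j : ℕ) : relProb n k p (j + 1) = relProb n k p j * ratio n k p j :=
  prod_range_succ _ _

theorem relProb_succ_self : relProb n k p (k + 1) = 0 := by
  rw [relProb_succ, ratio_self, mul_zero]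

theorem relProb_nonneg (hp0 : 0 ≤ p) (hp1 : p ≤ 1) (j : ℕ) : 0 ≤ relProb n k p j :=
  prod_nonneg fun i _ ↦ ratio_nonneg hp0 hp1 i

theorem relProb_add_le (hp0 : 0 < p) (hp1 : p ≤ 1) (i j : ℕ) :
    relProb n k p (i + j) ≤ relProb n k p i * relProb n k p j :=
  prod_range_add_le_mul (ratio_nonneg hp0.le hp1) (ratio_antitone hp0 hp1) i j

theorem relProb_add_le_mul_pow (hp0 : 0 < p) (hp1 : p ≤ 1) (a i : ℕ) :
    relProb n k p (a + i) ≤ relProb n k p a * ratio n k p a ^ i :=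
  prod_range_add_le_mul_pow (ratio_nonneg hp0.le hp1) (ratio_antitone hp0 hp1) a i

theorem relProb_le_one (hp0 : 0 < p) (hp1 : p ≤ 1) (hkn : k ≤ n) (hkp : (k : ℝ) ≤ p * n)
    (j : ℕ) : relProb n k p j ≤ 1 :=
  prod_le_one (fun i _ ↦ ratio_nonneg hp0.le hp1 i)
    fun i _ ↦ (ratio_lt_one hp0 hp1 hkn hkp i).le

theorem relProb_lt_one (hp0 : 0 < p) (hp1 : p ≤ 1) (hkn : k ≤ n) (hkp : (k : ℝ) ≤ p * n)
    {a : ℕ} (ha : 0 < a) : relProb n k p a < 1 := by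
  have h := relProb_add_le_mul_pow (n := n) (k := k) hp0 hp1 0 a
  rw [zero_add, relProb_zero, one_mul] at h
  exact h.trans_lt (pow_lt_one₀ (ratio_nonneg hp0.le hp1 0)
    (ratio_zero_lt_one hp0 hkn hkp) ha.ne')

theorem b_sub_succ (hp : p ≠ 0) {j : ℕ} (hjk : j < k) (hkn : k ≤ n) :
    b n (k - (j + 1)) p = b n (k - j) p * ratio n k p j := by
  have h := mul_b_eq_mul_b_succ (n := n) (t := k - (j + 1)) (by omega) p
  rw [show k - (j + 1) + 1 = k - j by omega, show n - (k - (j + 1)) = n - k + j + 1 by omega] at h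
  have hden : p * ((n - k + j + 1 : ℕ) : ℝ) ≠ 0 := mul_ne_zero hp (by positivity)
  rw [ratio, mul_div_assoc', eq_div_iff hden]
  linear_combination h

theorem b_sub_eq_mul_relProb (hp : p ≠ 0) (hkn : k ≤ n) {j : ℕ} (hj : j ≤ k) :
    b n (k - j) p = b n k p * relProb n k p j := by
  induction j with
  | zero => rw [Nat.sub_zero, relProb_zero, mul_one]
  | succ j ih => rw [b_sub_succ hp hj hkn, ih (by omega), relProb_succ, mul_assoc]

theorem B_eq_mul_relTail (hp : p ≠ 0) (hkn : k ≤ n) : B n k p = b n k p * relTail n k p := by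
  change ∑ j ∈ range (k + 1), b n j p = _
  rw [← sum_range_reflect, relTail, mul_sum]
  exact sum_congr rfl fun j hj ↦ b_sub_eq_mul_relProb hp hkn (by simpa [Nat.lt_succ_iff] using hj)

theorem one_le_relTail (hp0 : 0 ≤ p) (hp1 : p ≤ 1) : 1 ≤ relTail n k p := by
  rw [← relProb_zero (n := n) (k := k) (p := p)]
  exact single_le_sum (fun j _ ↦ relProb_nonneg hp0 hp1 j) (mem_range.2 k.succ_pos)

/-- Summing the recurrence `p (n - k + j + 1) c_{j+1} = (1 - p) (k - j) c_j` over `j ≤ k`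
telescopes, since `c_{k+1} = 0`. -/
theorem sum_mul_relProb (hp : p ≠ 0) (hkn : k ≤ n) :
    ∑ j ∈ range (k + 1), (j : ℝ) * relProb n k p j =
      (1 - p) * k * relTail n k p - p * (n - k) * (relTail n k p - 1) := by
  set g : ℕ → ℝ := fun j ↦ p * ((n : ℝ) - k + j) * relProb n k p j
  have hstep : ∀ j ∈ range (k + 1),
      g (j + 1) - g j = ((1 - p) * (k - j) - p * (n - k + j)) * relProb n k p j := by
    intro j hj
    have hjk : j ≤ k := by simpa [Nat.lt_succ_iff] using hj
    have h := mul_ratio (n := n) (k := k) hp j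
    push_cast [Nat.cast_sub hkn, Nat.cast_sub hjk] at h
    simp only [g, relProb_succ]
    push_cast
    linear_combination relProb n k p j * h
  have htel := sum_range_sub g (k + 1)
  rw [sum_congr rfl hstep] at htel
  have hexpand : ∑ j ∈ range (k + 1), ((1 - p) * (k - j) - p * (n - k + j)) * relProb n k p j =
      (1 - p) * k * relTail n k p - p * (n - k) * relTail n k p -
        ∑ j ∈ range (k + 1), (j : ℝ) * relProb n k p j := by
    simp only [relTail, mul_sum, ← sum_sub_distrib]
    exact sum_congr rfl fun j _ ↦ by ring
  simp only [g, relProb_succ_self, relProb_zero, Nat.cast_zero, add_zero, mul_zero, mul_one] at htel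
  linarith

theorem sum_mul_relProb_le (hp0 : 0 < p) (hp1 : p ≤ 1) :
    ∑ j ∈ range (k + 1), (j : ℝ) * relProb n k p j ≤
      (relTail n k p - 1) * relTail n k p := by
  have h := sum_range_succ_mul_le_sq (relProb_nonneg (n := n) (k := k) hp0.le hp1)
    (relProb_add_le hp0 hp1) (k + 1)
  simp only [add_mul, one_mul, sum_add_distrib] at h
  rw [relTail]
  nlinarith

theorem L_le_relTail (hp0 : 0 < p) (hp1 : p ≤ 1) (hkn : k ≤ n) (hkp : (k : ℝ) ≤ p * n) :
    L n k p ≤ relTail n k p :=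
  L_le_of_le_mul hkp (one_le_relTail hp0.le hp1) <| by
    nlinarith [sum_mul_relProb (n := n) (k := k) hp0.ne' hkn,
      sum_mul_relProb_le (n := n) (k := k) hp0 hp1]

theorem relTail_lt_V (hk : 0 < k) (hp0 : 0 < p) (hp1 : p < 1) (hkn : k ≤ n)
    (hkp : (k : ℝ) ≤ p * n) {a : ℕ} (ha : a ≤ k) : relTail n k p < V n k p a := by
  set ρ := ratio n k p a
  set G := ∑ i ∈ range (k + 1 - a), ρ ^ i
  have hρ0 : 0 ≤ ρ := ratio_nonneg hp0.le hp1.le a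
  have hρ1 : ρ < 1 := ratio_lt_one hp0 hp1.le hkn hkp a
  have hsplit : relTail n k p =
      ∑ j ∈ range a, relProb n k p j + ∑ i ∈ range (k + 1 - a), relProb n k p (a + i) := by
    rw [relTail, ← sum_range_add, Nat.add_sub_cancel' (by omega)]
  have hhead : ∑ j ∈ range a, relProb n k p j ≤ a := by
    simpa using sum_le_card_nsmul (range a) _ 1 fun j _ ↦ relProb_le_one hp0 hp1.le hkn hkp j
  have htail : ∑ i ∈ range (k + 1 - a), relProb n k p (a + i) ≤ relProb n k p a * G := by
    rw [mul_sum]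
    exact sum_le_sum fun i _ ↦ relProb_add_le_mul_pow hp0 hp1.le a i
  -- the strict inequality comes from `c₀ = 1, ρ₀ > 0` if `a = 0` and from `c_a < 1` otherwise
  have hstrict : relProb n k p a * G < (1 - ρ)⁻¹ := by
    rcases a.eq_zero_or_pos with rfl | hapos
    · rw [relProb_zero, one_mul]
      exact geom_sum_lt_inv_one_sub (ratio_pos hp0 hp1 hk) hρ1 _
    · calc relProb n k p a * G
          < G := mul_lt_of_lt_one_left (geom_sum_pos hρ0 (by omega))
            (relProb_lt_one hp0 hp1.le hkn hkp hapos)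
        _ ≤ (1 - ρ)⁻¹ := geom_sum_le_inv_one_sub hρ0 hρ1 _
  rw [V_eq_add_inv_one_sub_ratio hp0.ne' hkn ha, hsplit]
  linarith

theorem relTail_lt_U (hk : 0 < k) (hp0 : 0 < p) (hp1 : p < 1) (hkn : k ≤ n)
    (hkp : (k : ℝ) ≤ p * n) : relTail n k p < U n k p := by
  obtain ⟨a, ha, hmin⟩ :=
    exists_min_image (range (k + 1)) (fun a : ℕ ↦ V n k p a) ⟨0, by simp⟩
  refine (relTail_lt_V hk hp0 hp1 hkn hkp (mem_range_succ_iff.1 ha)).trans_le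
    (le_ciInf fun c ↦ ?_)
  rcases le_or_gt c k with hc | hc
  · exact hmin c (mem_range_succ_iff.2 hc)
  · refine le_of_lt ?_
    calc V n k p a ≤ V n k p k := hmin k (self_mem_range_succ k)
      _ = k + 1 := V_self (by positivity)
      _ ≤ c := by exact_mod_cast hc
      _ < V n k p c := lt_V_self hp0 hkp (by exact_mod_cast hkn) c.cast_nonneg

theorem B_mul_exp_mul_D (hk : 0 < k) (hkn : k < n) (hp0 : 0 < p) (hp1 : p < 1) :
    B n k p * exp (n * D (k / n) p) =
      relTail n k p / factorialExpRatio k * (factorialExpRatio n / factorialExpRatio (n - k)) := by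
  rw [B_eq_mul_relTail hp0.ne' hkn.le, mul_right_comm, b_mul_exp_mul_D hk hkn hp0 hp1,
    choose_mul_div_pow_mul_div_pow hkn.le]
  ring

end BinomialTail

theorem binomial_tail_factorial_bounds_general
    (k n : ℕ) (hk : 0 < k) (p : ℝ) (hp0 : 0 < p) (hp1 : p < 1)
    (hkp : (k : ℝ) ≤ p * n) :
    1 / (Real.exp 1 * Real.sqrt k) < L n k p / (Real.exp 1 * Real.sqrt k) ∧
    L n k p / (Real.exp 1 * Real.sqrt k) ≤
      (k : ℝ) ^ k * L n k p / (Real.exp 1 ^ k * (Nat.factorial k : ℝ)) ∧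
    (k : ℝ) ^ k * L n k p / (Real.exp 1 ^ k * (Nat.factorial k : ℝ)) <
      B n k p * Real.exp (n * D ((k : ℝ) / n) p) ∧
    B n k p * Real.exp (n * D ((k : ℝ) / n) p) <
      Real.sqrt ((n : ℝ) / ((n : ℝ) - k)) *
        ((k : ℝ) ^ k * U n k p) / (Real.exp 1 ^ k * (Nat.factorial k : ℝ)) := by
  have hk' : (0 : ℝ) < k := by exact_mod_cast hk
  have hkn : k < n := by
    have : (k : ℝ) < n := by nlinarith
    exact_mod_cast this
  set S := BinomialTail.relTail n k p
  have hL : 1 < L n k p := one_lt_L hkp (mul_pos (by linarith) hk')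
  have hLS : L n k p ≤ S := BinomialTail.L_le_relTail hp0 hp1.le hkn.le hkp
  have hSU : S < U n k p := BinomialTail.relTail_lt_U hk hp0 hp1 hkn.le hkp
  have htk : factorialExpRatio k ≤ exp 1 * √k := by
    have h := factorialExpRatio_div_le one_pos hk
    rwa [factorialExpRatio_one, Nat.cast_one, div_one, div_le_iff₀' (exp_pos 1)] at h
  have hlow : 1 < factorialExpRatio n / factorialExpRatio (n - k) :=
    (one_lt_div (factorialExpRatio_pos _)).2 (factorialExpRatio_lt (by omega) (by omega))
  have hup : factorialExpRatio n / factorialExpRatio (n - k) ≤ √(n / (n - k)) := by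
    simpa [Nat.cast_sub hkn.le] using factorialExpRatio_div_le (m := n - k) (by omega) (by omega)
  have htk0 := factorialExpRatio_pos k
  have hS : 0 < S / factorialExpRatio k := div_pos (by linarith) htk0
  rw [BinomialTail.B_mul_exp_mul_D hk hkn hp0 hp1, pow_mul_div_exp_pow_mul_factorial, mul_div_assoc,
    pow_mul_div_exp_pow_mul_factorial]
  refine ⟨by gcongr, by gcongr, ?_, ?_⟩
  · calc L n k p / factorialExpRatio k ≤ S / factorialExpRatio k := by gcongr
      _ < S / factorialExpRatio k * (factorialExpRatio n / factorialExpRatio (n - k)) :=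
        lt_mul_of_one_lt_right hS hlow
  · calc S / factorialExpRatio k * (factorialExpRatio n / factorialExpRatio (n - k))
        ≤ S / factorialExpRatio k * √(n / (n - k)) := by gcongr
      _ < U n k p / factorialExpRatio k * √(n / (n - k)) := by
        gcongr
        linarith
      _ = √(n / (n - k)) * (U n k p / factorialExpRatio k) := mul_comm _ _

theorem binomial_tail_factorial_bounds
    (k n : ℕ) (hk : 0 < k) (hn : 0 < n) (p : ℝ) (hp0 : 0 < p) (hp1 : p < 1)
    (hkp : (k : ℝ) ≤ p * n) :
    1 / (Real.exp 1 * Real.sqrt k) < L n k p / (Real.exp 1 * Real.sqrt k) ∧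
    L n k p / (Real.exp 1 * Real.sqrt k) ≤
      (k : ℝ) ^ k * L n k p / (Real.exp 1 ^ k * (Nat.factorial k : ℝ)) ∧
    (k : ℝ) ^ k * L n k p / (Real.exp 1 ^ k * (Nat.factorial k : ℝ)) <
      B n k p * Real.exp (n * D ((k : ℝ) / n) p) ∧
    B n k p * Real.exp (n * D ((k : ℝ) / n) p) <
      Real.sqrt ((n : ℝ) / ((n : ℝ) - k)) *
        ((k : ℝ) ^ k * U n k p) / (Real.exp 1 ^ k * (Nat.factorial k : ℝ)) :=
  binomial_tail_factorial_bounds_general k n hk p hp0 hp1 hkp
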